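/- arXiv:1604.08179 — 2 statements merged into one kernel-verified Lean document; each statement's English description precedes it below -/
import Mathlib

section
/- Assume 1 < c_A ≤ c_B and c_A < A. Fix j* ∈ T_A and let G* be the graph on V in which T_A induces a complete graph and every node of T_B is adjacent to j* and to no other node. Then G* is pairwise stable. -/
/-!
The hub `jstar` is adjacent to every other node of `G*`, so every node is within distance 2 of
everyone. Adding a missing link therefore only shortens the distance between its two endpoints,
from 2 to 1. One endpoint of a missing link is a minor player, so the other endpoint saves 1 and
pays a link cost greater than 1. Removing a link between two major players saves `c_A` but
raises their distance from 1 to at least 2, costing at least `A > c_A`; removing the link of a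
minor player isolates it, so both endpoints' costs become infinite.
-/

open SimpleGraph Classical
open scoped ENNReal

noncomputable section

variable {V : Type*} [Fintype V] [DecidableEq V]

/-- The degree of node `i` in `G`. -/
def degE (G : SimpleGraph V) (i : V) : ℕ := (G.neighborSet i).ncard

/-- The hop distance between `i` and `j`, with value `+∞` for unreachable pairs. -/
def dE (G : SimpleGraph V) (i j : V) : ℝ≥0∞ :=
  if G.Reachable i j then (G.dist i j : ℝ≥0∞) else ⊤

/-- Basic model: the cost of node `i`, where a node of type A (in `TA`) pays link
cost `cA`, a node of type B (not in `TA`) pays `cB`, distances to type-A nodes are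
weighted by `A` and to type-B nodes by `1`. -/
def cost (TA : Finset V) (A cA cB : ℝ) (G : SimpleGraph V) (i : V) : ℝ≥0∞ :=
  (degE G i : ℝ≥0∞) * ENNReal.ofReal (if i ∈ TA then cA else cB)
    + ENNReal.ofReal A * ∑ j ∈ TA, dE G i j
    + ∑ j ∈ TAᶜ, dE G i j

/-- `G` with the edge `ij` removed. -/
def delE (G : SimpleGraph V) (i j : V) : SimpleGraph V := G.deleteEdges {s(i, j)}

/-- `G` with the edge `ij` added. -/
def addE (G : SimpleGraph V) (i j : V) : SimpleGraph V := G ⊔ edge i j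

/-- Pairwise stability: removing any present edge strictly increases the cost of both
endpoints, and adding any absent edge strictly increases the cost of at least one
endpoint. -/
def PairwiseStable (TA : Finset V) (A cA cB : ℝ) (G : SimpleGraph V) : Prop :=
  (∀ i j : V, G.Adj i j →
    cost TA A cA cB G i < cost TA A cA cB (delE G i j) i ∧
    cost TA A cA cB G j < cost TA A cA cB (delE G i j) j) ∧
  (∀ i j : V, i ≠ j → ¬ G.Adj i j →
    cost TA A cA cB G i < cost TA A cA cB (addE G i j) i ∨
    cost TA A cA cB G j < cost TA A cA cB (addE G i j) j)

/-- The social cost: the sum of the individual costs. -/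
def socialCost (TA : Finset V) (A cA cB : ℝ) (G : SimpleGraph V) : ℝ≥0∞ :=
  ∑ i, cost TA A cA cB G i

/-- The graph in which `T_A` induces a complete graph and every node of `T_B` is
adjacent to `jstar ∈ T_A` and to no other node. -/
def Gstar (TA : Finset V) (jstar : V) : SimpleGraph V :=
  SimpleGraph.fromRel (fun i j => (i ∈ TA ∧ j ∈ TA) ∨ (i ∉ TA ∧ j = jstar))

/-- The graph in which `T_A` induces a complete graph, every node of `T_B` is adjacent
to every node of `T_A`, and no two nodes of `T_B` are adjacent. -/
def Gss (TA : Finset V) : SimpleGraph V :=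
  SimpleGraph.fromRel (fun i j => i ∈ TA ∨ j ∈ TA)

end

theorem ENNReal.lt_of_add_le_add_of_lt {x y a b : ℝ≥0∞} (hx : x ≠ ⊤) (hab : a < b)
    (h : x + b ≤ y + a) : x < y := by
  by_contra! hyx
  have : x + b ≤ x + a := h.trans (by gcongr)
  exact (ENNReal.add_le_add_iff_left hx).1 this |>.not_gt hab

theorem Finset.sum_add_le_sum_add_of_forall_ne {ι M : Type*} [AddCommMonoid M] [PartialOrder M]
    [IsOrderedAddMonoid M] [DecidableEq ι] {s : Finset ι} {f g : ι → M} {j : ι} {a b : M}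
    (hj : j ∈ s) (hfgj : f j + a ≤ g j + b) (hfg : ∀ k ∈ s, k ≠ j → f k ≤ g k) :
    ∑ k ∈ s, f k + a ≤ ∑ k ∈ s, g k + b := by
  rw [← Finset.add_sum_erase s f hj, ← Finset.add_sum_erase s g hj, add_right_comm,
    add_right_comm (g j)]
  gcongr with k hk
  exact hfg k (Finset.mem_of_mem_erase hk) (Finset.ne_of_mem_erase hk)

section

variable {V : Type*} {G : SimpleGraph V} {i j k : V}

theorem SimpleGraph.two_le_edist (hij : i ≠ j) (hadj : ¬ G.Adj i j) : 2 ≤ G.edist i j := by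
  rw [← one_add_one_eq_two]
  refine Order.add_one_le_of_lt (not_le.1 fun h => ?_)
  exact (edist_le_one_iff_adj_or_eq.1 h).elim hadj hij

theorem SimpleGraph.edist_le_two_of_forall_adj {h : V} (hh : ∀ v, v ≠ h → G.Adj v h)
    (i j : V) : G.edist i j ≤ 2 := by
  have hle : ∀ v, G.edist v h ≤ 1 := fun v =>
    edist_le_one_iff_adj_or_eq.2 ((eq_or_ne v h).elim Or.inr fun hv => Or.inl (hh v hv))
  calc G.edist i j ≤ G.edist i h + G.edist h j := G.edist_triangle
    _ ≤ 1 + 1 := by rw [edist_comm (u := h)]; gcongr <;> apply hle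
    _ = 2 := one_add_one_eq_two

theorem delE_comm (G : SimpleGraph V) (i j : V) : delE G i j = delE G j i := by
  rw [delE, Sym2.eq_swap, ← delE]

theorem addE_comm (G : SimpleGraph V) (i j : V) : addE G i j = addE G j i := by
  rw [addE, edge_comm, ← addE]

theorem addE_adj_iff_of_ne (hkj : k ≠ j) : (addE G i j).Adj i k ↔ G.Adj i k := by
  simp only [addE, sup_adj, edge_adj]
  exact or_iff_left (by rintro ⟨⟨-, h⟩ | ⟨-, h⟩, hne⟩; exacts [hkj h, hne h.symm])

theorem degE_delE [Finite V] (hadj : G.Adj i j) : degE G i = degE (delE G i j) i + 1 := by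
  have : (delE G i j).neighborSet i = G.neighborSet i \ {j} := by
    ext k
    simp only [delE, mem_neighborSet, deleteEdges_adj, Set.mem_singleton_iff, Set.mem_sdiff,
      Sym2.congr_right]
  rw [degE, degE, this]
  exact (Set.ncard_sdiff_singleton_add_one hadj (Set.toFinite _)).symm

theorem degE_addE [Finite V] (hij : i ≠ j) (hadj : ¬ G.Adj i j) :
    degE (addE G i j) i = degE G i + 1 := by
  have : (addE G i j).neighborSet i = insert j (G.neighborSet i) := by
    ext k
    simp only [addE, mem_neighborSet, sup_adj, edge_adj, Set.mem_insert_iff]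
    aesop
  rw [degE, degE, this]
  exact Set.ncard_insert_of_notMem hadj (Set.toFinite _)

theorem edist_delE_self (hadj : G.Adj i j) : 2 ≤ (delE G i j).edist i j :=
  two_le_edist hadj.ne (by simp [delE])

theorem edist_le_edist_addE (hkj : k ≠ j) (hk : G.edist i k ≤ 2) :
    G.edist i k ≤ (addE G i j).edist i k := by
  by_contra! hlt
  rw [← one_add_one_eq_two] at hk
  rcases edist_le_one_iff_adj_or_eq.1 (Order.le_of_lt_add_one (hlt.trans_le hk)) with hadj | rfl
  · rw [addE_adj_iff_of_ne hkj] at hadj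
    rw [edist_eq_one_iff_adj.2 hadj,
      edist_eq_one_iff_adj.2 ((addE_adj_iff_of_ne hkj).2 hadj)] at hlt
    exact hlt.false
  · simp at hlt

theorem edist_le_edist_addE_self_add_one (hij : i ≠ j) (h : G.edist i j ≤ 2) :
    G.edist i j ≤ (addE G i j).edist i j + 1 :=
  h.trans <| by
    rw [← one_add_one_eq_two]
    gcongr
    exact Order.one_le_iff_pos.2 (edist_pos_of_ne hij)

theorem not_reachable_delE_of_forall_adj (hj : ∀ k, G.Adj i k → k = j) (hij : i ≠ j) :
    ¬ (delE G i j).Reachable i j := by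
  rintro ⟨_ | ⟨hadj, -⟩⟩
  · exact hij rfl
  · rw [delE, deleteEdges_adj] at hadj
    exact hadj.2 (by rw [hj _ hadj.1]; rfl)

end

section

variable {V : Type*} [Fintype V] [DecidableEq V] {TA : Finset V} {A cA cB : ℝ}
  {G : SimpleGraph V} {i j : V}

theorem dE_eq_edist (G : SimpleGraph V) (i j : V) : dE G i j = G.edist i j := by
  unfold dE
  split_ifs with h
  · rw [← h.coe_dist_eq_edist, ENat.toENNReal_coe]
  · rw [edist_eq_top_of_not_reachable h, ENat.toENNReal_top]

theorem cost_ne_top (h : ∀ k, G.edist i k ≠ ⊤) : cost TA A cA cB G i ≠ ⊤ := by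
  have hd : ∀ k, dE G i k ≠ ⊤ := fun k => by simpa [dE_eq_edist] using h k
  unfold cost
  simp [ENNReal.mul_ne_top, hd]

theorem cost_eq_top_of_not_reachable (hA : 0 < A) {k : V} (h : ¬ G.Reachable i k) :
    cost TA A cA cB G i = ⊤ := by
  have hk : dE G i k = ⊤ := by simp [dE_eq_edist, edist_eq_top_of_not_reachable h]
  by_cases hkA : k ∈ TA
  · have : ∑ l ∈ TA, dE G i l = ⊤ := ENNReal.sum_eq_top.2 ⟨k, hkA, hk⟩
    simp [cost, this, ENNReal.mul_top, hA]
  · have : ∑ l ∈ TAᶜ, dE G i l = ⊤ :=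
      ENNReal.sum_eq_top.2 ⟨k, Finset.mem_compl.2 hkA, hk⟩
    simp [cost, this]

theorem cost_lt_cost_delE (hA : 0 < A) (hc : (if i ∈ TA then cA else cB) < A)
    (hfin : cost TA A cA cB G i ≠ ⊤) (hadj : G.Adj i j) (hj : j ∈ TA) :
    cost TA A cA cB G i < cost TA A cA cB (delE G i j) i := by
  set G' := delE G i j
  set c := ENNReal.ofReal (if i ∈ TA then cA else cB)
  have hmono : ∀ k, dE G i k ≤ dE G' i k := fun k => by
    rw [dE_eq_edist, dE_eq_edist]
    exact_mod_cast edist_anti (deleteEdges_le _)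
  have hsumA : ∑ k ∈ TA, dE G i k + 1 ≤ ∑ k ∈ TA, dE G' i k := by
    rw [← add_zero (∑ k ∈ TA, dE G' i k)]
    refine Finset.sum_add_le_sum_add_of_forall_ne hj ?_ fun k _ _ => hmono k
    rw [dE_eq_edist, dE_eq_edist, edist_eq_one_iff_adj.2 hadj, add_zero]
    exact_mod_cast edist_delE_self hadj
  refine ENNReal.lt_of_add_le_add_of_lt hfin ((ENNReal.ofReal_lt_ofReal_iff hA).2 hc) ?_
  calc cost TA A cA cB G i + ENNReal.ofReal A
      = degE G' i * c + ENNReal.ofReal A * (∑ k ∈ TA, dE G i k + 1)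
          + ∑ k ∈ TAᶜ, dE G i k + c := by
        rw [cost, degE_delE hadj]; push_cast; ring
    _ ≤ cost TA A cA cB G' i + c := by
        unfold cost
        gcongr with k
        exact hmono k

theorem cost_lt_cost_addE (hc : 1 < (if i ∈ TA then cA else cB))
    (hecc : ∀ k, G.edist i k ≤ 2) (hij : i ≠ j) (hadj : ¬ G.Adj i j) (hj : j ∉ TA) :
    cost TA A cA cB G i < cost TA A cA cB (addE G i j) i := by
  set G' := addE G i j
  set c := ENNReal.ofReal (if i ∈ TA then cA else cB)
  have hfar : ∀ k, k ≠ j → dE G i k ≤ dE G' i k := fun k hkj => by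
    simpa [dE_eq_edist] using edist_le_edist_addE hkj (hecc k)
  have hsumA : ∑ k ∈ TA, dE G i k ≤ ∑ k ∈ TA, dE G' i k :=
    Finset.sum_le_sum fun k hk => hfar k (ne_of_mem_of_not_mem hk hj)
  have hsumB : ∑ k ∈ TAᶜ, dE G i k ≤ ∑ k ∈ TAᶜ, dE G' i k + 1 := by
    rw [← add_zero (∑ k ∈ TAᶜ, dE G i k)]
    refine Finset.sum_add_le_sum_add_of_forall_ne (Finset.mem_compl.2 hj) ?_
      fun k _ hkj => hfar k hkj
    rw [dE_eq_edist, dE_eq_edist, add_zero]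
    exact_mod_cast edist_le_edist_addE_self_add_one hij (hecc j)
  have hfin := cost_ne_top (TA := TA) (A := A) (cA := cA) (cB := cB)
    fun k => ((hecc k).trans_lt (by decide)).ne
  refine ENNReal.lt_of_add_le_add_of_lt hfin (ENNReal.one_lt_ofReal.2 hc) ?_
  calc cost TA A cA cB G i + c
      = (degE G i + 1) * c + ENNReal.ofReal A * ∑ k ∈ TA, dE G i k
          + ∑ k ∈ TAᶜ, dE G i k := by
        rw [cost]; ring
    _ ≤ (degE G i + 1) * c + ENNReal.ofReal A * ∑ k ∈ TA, dE G' i k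
          + (∑ k ∈ TAᶜ, dE G' i k + 1) := by
        gcongr
    _ = cost TA A cA cB G' i + 1 := by
        rw [cost, degE_addE hij hadj]; push_cast; ring

end

section

variable {V : Type*} {TA : Finset V} {jstar i j : V}

theorem Gstar_adj_iff :
    (Gstar TA jstar).Adj i j ↔ i ≠ j ∧
      ((i ∈ TA ∧ j ∈ TA) ∨ (i ∉ TA ∧ j = jstar) ∨ (j ∉ TA ∧ i = jstar)) := by
  simp only [Gstar, fromRel_adj]
  tauto

theorem Gstar_adj_jstar (hjstar : jstar ∈ TA) (hi : i ≠ jstar) : (Gstar TA jstar).Adj i jstar :=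
  Gstar_adj_iff.2 ⟨hi, by by_cases i ∈ TA <;> simp_all⟩

theorem eq_jstar_of_Gstar_adj (hjstar : jstar ∈ TA) (hi : i ∉ TA)
    (hadj : (Gstar TA jstar).Adj i j) : j = jstar := by
  obtain ⟨-, ⟨hi', -⟩ | ⟨-, rfl⟩ | ⟨-, rfl⟩⟩ := Gstar_adj_iff.1 hadj
  exacts [absurd hi' hi, rfl, absurd hjstar hi]

theorem not_reachable_delE_Gstar (hjstar : jstar ∈ TA) (hadj : (Gstar TA jstar).Adj i j)
    (hij : i ∉ TA ∨ j ∉ TA) : ¬ (delE (Gstar TA jstar) i j).Reachable i j := by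
  rcases hij with hi | hj
  · refine not_reachable_delE_of_forall_adj (fun k hk => ?_) hadj.ne
    rw [eq_jstar_of_Gstar_adj hjstar hi hk, eq_jstar_of_Gstar_adj hjstar hi hadj]
  · rw [delE_comm, reachable_comm]
    refine not_reachable_delE_of_forall_adj (fun k hk => ?_) hadj.ne.symm
    rw [eq_jstar_of_Gstar_adj hjstar hj hk, eq_jstar_of_Gstar_adj hjstar hj hadj.symm]

end

section

variable {V : Type*} [Fintype V] [DecidableEq V]

theorem stmt5_general (TA : Finset V) (A cA cB : ℝ)
    (hcA : 1 < cA) (hAB : cA ≤ cB) (hcAA : cA < A)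
    (jstar : V) (hjstar : jstar ∈ TA) :
    PairwiseStable TA A cA cB (Gstar TA jstar) := by
  have hA : 0 < A := by linarith
  have hecc : ∀ i k, (Gstar TA jstar).edist i k ≤ 2 :=
    edist_le_two_of_forall_adj fun _ hv => Gstar_adj_jstar hjstar hv
  have hfin : ∀ i, cost TA A cA cB (Gstar TA jstar) i < ⊤ := fun i =>
    (cost_ne_top fun k => ((hecc i k).trans_lt (by decide)).ne).lt_top
  refine ⟨fun i j hadj => ?_, fun i j hij hadj => ?_⟩
  · by_cases hTA : i ∈ TA ∧ j ∈ TA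
    · refine ⟨cost_lt_cost_delE hA (by rwa [if_pos hTA.1]) (hfin i).ne hadj hTA.2, ?_⟩
      rw [delE_comm]
      exact cost_lt_cost_delE hA (by rwa [if_pos hTA.2]) (hfin j).ne hadj.symm hTA.1
    · have hdisc := not_reachable_delE_Gstar hjstar hadj (not_and_or.1 hTA)
      rw [cost_eq_top_of_not_reachable hA hdisc,
        cost_eq_top_of_not_reachable hA (mt Reachable.symm hdisc)]
      exact ⟨hfin i, hfin j⟩
  · have hc : ∀ v, 1 < (if v ∈ TA then cA else cB) := fun v => by split_ifs <;> linarith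
    have hB : i ∉ TA ∨ j ∉ TA := by
      by_contra! h
      exact hadj (Gstar_adj_iff.2 ⟨hij, Or.inl h⟩)
    rcases hB with hi | hj
    · right
      rw [addE_comm]
      exact cost_lt_cost_addE (hc j) (hecc j) hij.symm (fun h => hadj h.symm) hi
    · exact .inl (cost_lt_cost_addE (hc i) (hecc i) hij hadj hj)

/-- Assuming `1 < c_A ≤ c_B` and `c_A < A`, the star-over-clique graph
`G*` (T_A a clique, every type-B node adjacent to `jstar ∈ T_A` only) is pairwise stable. -/
theorem stmt5 (TA : Finset V) (A cA cB : ℝ)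
    (hA : 1 < A) (hcA : 1 < cA) (hAB : cA ≤ cB) (hcAA : cA < A)
    (jstar : V) (hjstar : jstar ∈ TA) :
    PairwiseStable TA A cA cB (Gstar TA jstar) :=
  stmt5_general TA A cA cB hcA hAB hcAA jstar hjstar

end
end

section
/- Assume 1 < c_A ≤ c_B, c_A < A, and (A+1)/2 > c. Let G** be the graph on V in which T_A induces a complete graph, every node of T_B is adjacent to every node of T_A, and no two nodes of T_B are adjacent. Then G** is pairwise stable with transfers. Since G** also minimizes the social cost among connected graphs on V, the price of stability when monetary transfers are allowed is 1. -/
open SimpleGraph Classical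
open scoped ENNReal

noncomputable section

variable {V : Type*} [Fintype V] [DecidableEq V]

/-- Pairwise stability with (monetary) transfers: removing any present edge does not
decrease the sum of the two endpoints' costs, and adding any absent edge does not
decrease the sum of the two endpoints' costs. -/
def PairwiseStableT (TA : Finset V) (A cA cB : ℝ) (G : SimpleGraph V) : Prop :=
  (∀ i j : V, G.Adj i j →
    cost TA A cA cB G i + cost TA A cA cB G j ≤
      cost TA A cA cB (delE G i j) i + cost TA A cA cB (delE G i j) j) ∧
  (∀ i j : V, i ≠ j → ¬ G.Adj i j →
    cost TA A cA cB G i + cost TA A cA cB G j ≤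
      cost TA A cA cB (addE G i j) i + cost TA A cA cB (addE G i j) j)

end

/-!
Write `C(i, G) = ∑ₖ (c_i·[ik ∈ G] + w_k·d(i,k))` with weights `w_k ∈ {A, 1}`. As non-adjacent
nodes are at distance at least two, an unordered pair `{i, k}` contributes at least
`c_i + c_k + w_i + w_k` to the social cost if it is linked and at least `2(w_i + w_k)` if not,
with equality in every graph of diameter two, such as `G**`. The hypotheses on the costs say
that for every pair `G**` picks the smaller of the two bounds, so it minimises the contribution
of every pair at once. This gives social optimality, and also stability with
transfers: adding or deleting `ij` only affects the contribution of `{i, j}` to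
`C(i) + C(j)`, which can only go up.
-/

open Finset

theorem Finset.sum_le_sum_of_add_le_of_eq_off_pair {ι M : Type*} [Fintype ι] [DecidableEq ι]
    [AddCommMonoid M] [PartialOrder M] [IsOrderedAddMonoid M] {f g : ι → M} {i j : ι}
    (hij : i ≠ j) (hle : f i + f j ≤ g i + g j) (heq : ∀ k, k ≠ i → k ≠ j → f k = g k) :
    ∑ k, f k ≤ ∑ k, g k := by
  have split : ∀ u : ι → M, ∑ k, u k = u i + u j + ∑ k ∈ (univ.erase i).erase j, u k := by
    intro u
    rw [← add_sum_erase _ u (mem_univ i),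
      ← add_sum_erase _ u (mem_erase.2 ⟨hij.symm, mem_univ j⟩), add_assoc]
  rw [split f, split g]
  gcongr with k hk
  simp only [mem_erase] at hk
  exact (heq k hk.2.1 hk.1).le

theorem Finset.sum_sum_le_of_add_swap_le {ι : Type*} [Fintype ι] {f g : ι → ι → ℝ}
    (h : ∀ i k, f i k + f k i ≤ g i k + g k i) :
    ∑ i, ∑ k, f i k ≤ ∑ i, ∑ k, g i k := by
  have hsum := sum_le_sum fun i (_ : i ∈ univ) => sum_le_sum fun k (_ : k ∈ univ) => h i k
  simp only [sum_add_distrib] at hsum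
  rw [sum_comm (f := fun i k => f k i), sum_comm (f := fun i k => g k i)] at hsum
  linarith

noncomputable section

section Adjacency

variable {V : Type*}

lemma gss_adj (TA : Finset V) (i j : V) :
    (Gss TA).Adj i j ↔ i ≠ j ∧ (i ∈ TA ∨ j ∈ TA) := by
  simp only [Gss, fromRel_adj]
  tauto

lemma gss_exists_common_neighbor {TA : Finset V} (hTA : TA.Nonempty) (x y : V)
    (hxy : x ≠ y) (hadj : ¬ (Gss TA).Adj x y) : ∃ m, (Gss TA).Adj x m ∧ (Gss TA).Adj m y := by
  obtain ⟨a, ha⟩ := hTA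
  refine ⟨a, (gss_adj TA x a).2 ⟨?_, Or.inr ha⟩, (gss_adj TA a y).2 ⟨?_, Or.inl ha⟩⟩ <;>
  · rintro rfl
    exact hadj ((gss_adj TA _ _).2 (by tauto))

lemma gss_connected {TA : Finset V} (hTA : TA.Nonempty) : (Gss TA).Connected := by
  obtain ⟨a, ha⟩ := hTA
  have hreach : ∀ i, (Gss TA).Reachable i a := fun i => by
    by_cases hia : i = a
    · rw [hia]
    · exact ((gss_adj TA i a).2 ⟨hia, Or.inr ha⟩).reachable
  exact (connected_iff _).2 ⟨fun i j => (hreach i).trans (hreach j).symm, ⟨a⟩⟩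

variable [DecidableEq V] (TA : Finset V) (A cA cB : ℝ)

def linkCost (i : V) : ℝ := if i ∈ TA then cA else cB

def distWeight (j : V) : ℝ := if j ∈ TA then A else 1

/-- The share of `i`'s cost due to `k` if distinct non-adjacent nodes were at distance two. -/
def localCost (G : SimpleGraph V) (i k : V) : ℝ :=
  if i = k then 0
  else if G.Adj i k then linkCost TA cA cB i + distWeight TA A k
  else 2 * distWeight TA A k

variable {TA A cA cB}

lemma localCost_self (G : SimpleGraph V) (i : V) : localCost TA A cA cB G i i = 0 := by
  simp [localCost]

lemma localCost_congr {G H : SimpleGraph V} {i k : V} (h : G.Adj i k ↔ H.Adj i k) :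
    localCost TA A cA cB G i k = localCost TA A cA cB H i k := by
  simp only [localCost, h]

lemma linkCost_nonneg (hcA : 0 ≤ cA) (hcB : 0 ≤ cB) (i : V) : 0 ≤ linkCost TA cA cB i := by
  unfold linkCost
  split_ifs <;> assumption

lemma distWeight_nonneg (hA : 0 ≤ A) (j : V) : 0 ≤ distWeight TA A j := by
  unfold distWeight
  split_ifs <;> linarith

lemma localCost_nonneg (hcA : 0 ≤ cA) (hcB : 0 ≤ cB) (hA : 0 ≤ A)
    (G : SimpleGraph V) (i k : V) : 0 ≤ localCost TA A cA cB G i k := by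
  have := linkCost_nonneg (TA := TA) hcA hcB i
  have := distWeight_nonneg (TA := TA) hA k
  unfold localCost
  split_ifs <;> linarith

lemma localCost_add_swap_gss_le (hcB : 1 ≤ cB) (hcAA : cA ≤ A) (hsum : cA + cB ≤ A + 1)
    (G : SimpleGraph V) (i k : V) :
    localCost TA A cA cB (Gss TA) i k + localCost TA A cA cB (Gss TA) k i ≤
      localCost TA A cA cB G i k + localCost TA A cA cB G k i := by
  by_cases hik : i = k
  · simp [hik, localCost_self]
  simp only [localCost, linkCost, distWeight, gss_adj, if_neg hik, if_neg (Ne.symm hik),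
    G.adj_comm k i]
  split_ifs <;> first | linarith | tauto

end Adjacency

section Cost

variable {V : Type*} [Fintype V] [DecidableEq V]

lemma dE_self (G : SimpleGraph V) (i : V) : dE G i i = 0 := by
  simp [dE]

lemma dE_of_adj {G : SimpleGraph V} {i j : V} (h : G.Adj i j) : dE G i j = 1 := by
  simp [dE, h.reachable, dist_eq_one_iff_adj.2 h]

lemma two_le_dE {G : SimpleGraph V} {i j : V} (hne : i ≠ j) (hnadj : ¬ G.Adj i j) :
    2 ≤ dE G i j := by
  unfold dE
  split_ifs with hr
  · have h0 := (hr.pos_dist_of_ne hne).ne'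
    have h1 : G.dist i j ≠ 1 := fun h => hnadj (dist_eq_one_iff_adj.1 h)
    exact_mod_cast (show 2 ≤ G.dist i j by omega)
  · exact le_top

lemma dE_le_two {G : SimpleGraph V} {i j k : V} (hik : G.Adj i k) (hkj : G.Adj k j) :
    dE G i j ≤ 2 := by
  simp only [dE, hik.reachable.trans hkj.reachable, if_true]
  exact_mod_cast dist_le (.cons hik (.cons hkj .nil))

variable (TA : Finset V) (A cA cB : ℝ)

def costTerm (G : SimpleGraph V) (i k : V) : ℝ≥0∞ :=
  (if G.Adj i k then ENNReal.ofReal (linkCost TA cA cB i) else 0)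
    + ENNReal.ofReal (distWeight TA A k) * dE G i k

lemma cost_eq_sum_costTerm (G : SimpleGraph V) (i : V) :
    cost TA A cA cB G i = ∑ k, costTerm TA A cA cB G i k := by
  have hdeg : (degE G i : ℝ≥0∞) = ∑ k, if G.Adj i k then 1 else 0 := by
    rw [degE, Set.ncard_eq_toFinset_card', sum_boole]
    congr 2
    ext k
    simp
  have hdist : ENNReal.ofReal A * ∑ j ∈ TA, dE G i j + ∑ j ∈ TAᶜ, dE G i j =
      ∑ k, ENNReal.ofReal (distWeight TA A k) * dE G i k := by
    rw [← sum_add_sum_compl TA, mul_sum]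
    congr 1 <;> refine sum_congr rfl fun k hk => ?_
    · simp [distWeight, hk]
    · simp [distWeight, mem_compl.1 hk]
  rw [cost, add_assoc, hdist, hdeg, sum_mul, ← sum_add_distrib]
  refine sum_congr rfl fun k _ => ?_
  split_ifs <;> simp [costTerm, linkCost, *]

variable {TA A cA cB}

lemma sum_localCost_nonneg (hcA : 0 ≤ cA) (hcB : 0 ≤ cB) (hA : 0 ≤ A)
    (G : SimpleGraph V) (i : V) : 0 ≤ ∑ k, localCost TA A cA cB G i k :=
  sum_nonneg fun k _ => localCost_nonneg hcA hcB hA G i k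

lemma ofReal_localCost_le_costTerm (G : SimpleGraph V) (i k : V) :
    ENNReal.ofReal (localCost TA A cA cB G i k) ≤ costTerm TA A cA cB G i k := by
  by_cases hik : i = k
  · simp [localCost, hik]
  by_cases hadj : G.Adj i k
  · simp only [localCost, costTerm, if_neg hik, if_pos hadj, dE_of_adj hadj, mul_one]
    exact ENNReal.ofReal_add_le
  · simp only [localCost, costTerm, if_neg hik, if_neg hadj, zero_add,
      ENNReal.ofReal_mul zero_le_two, ENNReal.ofReal_ofNat, mul_comm (2 : ℝ≥0∞)]
    gcongr
    exact two_le_dE hik hadj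

lemma costTerm_eq_ofReal_localCost (hcA : 0 ≤ cA) (hcB : 0 ≤ cB) (hA : 0 ≤ A)
    {G : SimpleGraph V} {i k : V} (hG : i ≠ k → ¬ G.Adj i k → ∃ m, G.Adj i m ∧ G.Adj m k) :
    costTerm TA A cA cB G i k = ENNReal.ofReal (localCost TA A cA cB G i k) := by
  refine le_antisymm ?_ (ofReal_localCost_le_costTerm G i k)
  by_cases hik : i = k
  · simp [localCost, costTerm, hik, dE_self]
  by_cases hadj : G.Adj i k
  · simp only [localCost, costTerm, if_neg hik, if_pos hadj, dE_of_adj hadj, mul_one]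
    rw [ENNReal.ofReal_add (linkCost_nonneg hcA hcB i) (distWeight_nonneg hA k)]
  · obtain ⟨m, him, hmk⟩ := hG hik hadj
    simp only [localCost, costTerm, if_neg hik, if_neg hadj, zero_add,
      ENNReal.ofReal_mul zero_le_two, ENNReal.ofReal_ofNat, mul_comm (2 : ℝ≥0∞)]
    gcongr
    exact dE_le_two him hmk

lemma ofReal_sum_localCost_le_cost (hcA : 0 ≤ cA) (hcB : 0 ≤ cB) (hA : 0 ≤ A)
    (G : SimpleGraph V) (i : V) :
    ENNReal.ofReal (∑ k, localCost TA A cA cB G i k) ≤ cost TA A cA cB G i := by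
  rw [ENNReal.ofReal_sum_of_nonneg fun k _ => localCost_nonneg hcA hcB hA G i k,
    cost_eq_sum_costTerm]
  exact sum_le_sum fun k _ => ofReal_localCost_le_costTerm G i k

lemma cost_eq_ofReal_sum_localCost (hcA : 0 ≤ cA) (hcB : 0 ≤ cB) (hA : 0 ≤ A)
    {G : SimpleGraph V} (hG : ∀ x y, x ≠ y → ¬ G.Adj x y → ∃ m, G.Adj x m ∧ G.Adj m y)
    (i : V) : cost TA A cA cB G i = ENNReal.ofReal (∑ k, localCost TA A cA cB G i k) := by
  rw [ENNReal.ofReal_sum_of_nonneg fun k _ => localCost_nonneg hcA hcB hA G i k,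
    cost_eq_sum_costTerm]
  exact sum_congr rfl fun k _ => costTerm_eq_ofReal_localCost hcA hcB hA (hG i k)

lemma sum_localCost_gss_le (hcB : 1 ≤ cB) (hcAA : cA ≤ A) (hsum : cA + cB ≤ A + 1)
    {G : SimpleGraph V} {i j : V} (hij : i ≠ j)
    (hG : ∀ x y, s(x, y) ≠ s(i, j) → ((Gss TA).Adj x y ↔ G.Adj x y)) :
    ∑ k, localCost TA A cA cB (Gss TA) i k + ∑ k, localCost TA A cA cB (Gss TA) j k ≤
      ∑ k, localCost TA A cA cB G i k + ∑ k, localCost TA A cA cB G j k := by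
  simp only [← sum_add_distrib]
  refine sum_le_sum_of_add_le_of_eq_off_pair hij ?_ fun k hki hkj => ?_
  · simp only [localCost_self, zero_add, add_zero, add_comm (localCost _ _ _ _ _ j i)]
    exact localCost_add_swap_gss_le hcB hcAA hsum G i j
  · congr 1 <;> refine localCost_congr (hG _ _ ?_) <;> simp [hki, hkj]

lemma cost_gss_add_le (hcA : 0 ≤ cA) (hcB : 1 ≤ cB) (hcAA : cA ≤ A)
    (hsum : cA + cB ≤ A + 1) (hTA : TA.Nonempty) {G : SimpleGraph V} {i j : V} (hij : i ≠ j)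
    (hG : ∀ x y, s(x, y) ≠ s(i, j) → ((Gss TA).Adj x y ↔ G.Adj x y)) :
    cost TA A cA cB (Gss TA) i + cost TA A cA cB (Gss TA) j ≤
      cost TA A cA cB G i + cost TA A cA cB G j := by
  have hcB₀ : 0 ≤ cB := by linarith
  have hA : 0 ≤ A := by linarith
  have hnonneg := sum_localCost_nonneg (TA := TA) hcA hcB₀ hA
  rw [cost_eq_ofReal_sum_localCost hcA hcB₀ hA (gss_exists_common_neighbor hTA),
    cost_eq_ofReal_sum_localCost hcA hcB₀ hA (gss_exists_common_neighbor hTA),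
    ← ENNReal.ofReal_add (hnonneg _ i) (hnonneg _ j)]
  calc _ ≤ ENNReal.ofReal (∑ k, localCost TA A cA cB G i k + ∑ k, localCost TA A cA cB G j k) :=
        ENNReal.ofReal_le_ofReal (sum_localCost_gss_le hcB hcAA hsum hij hG)
    _ = _ := ENNReal.ofReal_add (hnonneg G i) (hnonneg G j)
    _ ≤ _ := add_le_add (ofReal_sum_localCost_le_cost hcA hcB₀ hA G i)
        (ofReal_sum_localCost_le_cost hcA hcB₀ hA G j)

lemma gss_pairwiseStableT (hcA : 0 ≤ cA) (hcB : 1 ≤ cB) (hcAA : cA ≤ A)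
    (hsum : cA + cB ≤ A + 1) (hTA : TA.Nonempty) : PairwiseStableT TA A cA cB (Gss TA) := by
  refine ⟨fun i j hadj => cost_gss_add_le hcA hcB hcAA hsum hTA hadj.ne fun x y hxy => ?_,
    fun i j hij _ => cost_gss_add_le hcA hcB hcAA hsum hTA hij fun x y hxy => ?_⟩
  · simp [delE, hxy]
  · simp only [Ne, Sym2.eq_iff] at hxy
    simp [addE, edge_adj, hxy]

lemma socialCost_gss_le (hcA : 0 ≤ cA) (hcB : 1 ≤ cB) (hcAA : cA ≤ A)
    (hsum : cA + cB ≤ A + 1) (hTA : TA.Nonempty) (G : SimpleGraph V) :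
    socialCost TA A cA cB (Gss TA) ≤ socialCost TA A cA cB G := by
  have hcB₀ : 0 ≤ cB := by linarith
  have hA : 0 ≤ A := by linarith
  have hnonneg := sum_localCost_nonneg (TA := TA) hcA hcB₀ hA
  calc socialCost TA A cA cB (Gss TA)
      = ∑ i, ENNReal.ofReal (∑ k, localCost TA A cA cB (Gss TA) i k) :=
        sum_congr rfl fun i _ =>
          cost_eq_ofReal_sum_localCost hcA hcB₀ hA (gss_exists_common_neighbor hTA) i
    _ = ENNReal.ofReal (∑ i, ∑ k, localCost TA A cA cB (Gss TA) i k) :=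
        (ENNReal.ofReal_sum_of_nonneg fun i _ => hnonneg _ i).symm
    _ ≤ ENNReal.ofReal (∑ i, ∑ k, localCost TA A cA cB G i k) :=
        ENNReal.ofReal_le_ofReal
          (sum_sum_le_of_add_swap_le (localCost_add_swap_gss_le hcB hcAA hsum G))
    _ = ∑ i, ENNReal.ofReal (∑ k, localCost TA A cA cB G i k) :=
        ENNReal.ofReal_sum_of_nonneg fun i _ => hnonneg G i
    _ ≤ socialCost TA A cA cB G :=
        sum_le_sum fun i _ => ofReal_sum_localCost_le_cost hcA hcB₀ hA G i

theorem stmt12_general (TA : Finset V) (A cA cB c : ℝ)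
    (hcA : 1 < cA) (hAB : cA ≤ cB) (hcAA : cA < A)
    (hc : c = (cA + cB) / 2) (hceq : c < (A + 1) / 2)
    (hTA : TA.Nonempty) :
    PairwiseStableT TA A cA cB (Gss TA) ∧
    (∀ G : SimpleGraph V, G.Connected →
      socialCost TA A cA cB (Gss TA) ≤ socialCost TA A cA cB G) ∧
    sInf (socialCost TA A cA cB '' {G : SimpleGraph V | PairwiseStableT TA A cA cB G}) =
      sInf (socialCost TA A cA cB '' {G : SimpleGraph V | G.Connected}) := by
  have hcA₀ : 0 ≤ cA := by linarith
  have hcB : 1 ≤ cB := by linarith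
  have hsum : cA + cB ≤ A + 1 := by linarith
  have hstable := gss_pairwiseStableT hcA₀ hcB hcAA.le hsum hTA
  have hmin := socialCost_gss_le hcA₀ hcB hcAA.le hsum hTA
  have hsInf (S : Set (SimpleGraph V)) (hS : Gss TA ∈ S) :
      sInf (socialCost TA A cA cB '' S) = socialCost TA A cA cB (Gss TA) :=
    IsLeast.csInf_eq ⟨Set.mem_image_of_mem _ hS, by rintro _ ⟨G, -, rfl⟩; exact hmin G⟩
  refine ⟨hstable, fun G _ => hmin G, ?_⟩
  rw [hsInf {G | PairwiseStableT TA A cA cB G} hstable,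
    hsInf {G | G.Connected} (gss_connected hTA)]

/-- Assuming `1 < c_A ≤ c_B`, `c_A < A` and `(A+1)/2 > c`, the graph
`G**` (T_A a clique, every type-B node adjacent to every type-A node, no B–B edges) is
pairwise stable with transfers; since it also minimizes the social cost among connected
graphs, the price of stability with transfers is `1` (the minimal social cost over
graphs that are pairwise stable with transfers equals the minimal social cost over
connected graphs). -/
theorem stmt12 (TA : Finset V) (A cA cB c : ℝ)
    (hA : 1 < A) (hcA : 1 < cA) (hAB : cA ≤ cB) (hcAA : cA < A)
    (hc : c = (cA + cB) / 2) (hceq : c < (A + 1) / 2)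
    (hTA : TA.Nonempty) :
    PairwiseStableT TA A cA cB (Gss TA) ∧
    (∀ G : SimpleGraph V, G.Connected →
      socialCost TA A cA cB (Gss TA) ≤ socialCost TA A cA cB G) ∧
    sInf (socialCost TA A cA cB '' {G : SimpleGraph V | PairwiseStableT TA A cA cB G}) =
      sInf (socialCost TA A cA cB '' {G : SimpleGraph V | G.Connected}) :=
  stmt12_general TA A cA cB c hcA hAB hcAA hc hceq hTA

end Cost

end
end
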